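/- arXiv:1905.09032 — 2 statements merged into one kernel-verified Lean document; each statement's English description precedes it below -/
import Mathlib

section
/- Let L_h be an achiral lattice (an even lattice of signature (n,1) whose discriminant group has 3-torsion subgroup of order 3, admitting an achirality witness as in the definition), and let L_e be an even positive definite lattice that is generated over ℤ by its vectors of square 2 and whose discriminant group is annihilated by 2. Then the orthogonal direct sum L = L_e + L_h is achiral. -/
/-!  Basic framework for integral lattices given by Gram matrices. -/

structure IntLattice where
  n : ℕ
  B : Matrix (Fin n) (Fin n) ℤ

namespace IntLattice

/-- The bilinear form of the lattice on `ℤ^n`. -/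
def bform (L : IntLattice) (x y : Fin L.n → ℤ) : ℤ :=
  dotProduct x (L.B.mulVec y)

/-- The rational extension of the bilinear form, on `ℚ^n = L ⊗ ℚ`. -/
def bQ (L : IntLattice) (x y : Fin L.n → ℚ) : ℚ :=
  dotProduct x ((L.B.map (Int.cast : ℤ → ℚ)).mulVec y)

/-- The real extension of the bilinear form, on `ℝ^n = L ⊗ ℝ`. -/
def bR (L : IntLattice) (x y : Fin L.n → ℝ) : ℝ :=
  dotProduct x ((L.B.map (Int.cast : ℤ → ℝ)).mulVec y)

/-- The lattice is even: `b(x,x)` is even for all `x`. -/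
def IsEvenLat (L : IntLattice) : Prop := ∀ x, Even (L.bform x x)

/-- Nondegeneracy of the bilinear form. -/
def Nondeg (L : IntLattice) : Prop := L.B.det ≠ 0

/-- Symmetry of the Gram matrix. -/
def IsSymmLat (L : IntLattice) : Prop := L.B.IsSymm

/-- `ℤ ⊂ ℚ` as a `ℤ`-submodule of `ℚ`. -/
def intQ : Submodule ℤ ℚ := Submodule.span ℤ ({1} : Set ℚ)

/-- The lattice `L = ℤ^n` sitting inside `ℚ^n = L ⊗ ℚ`. -/
def latt (L : IntLattice) : Submodule ℤ (Fin L.n → ℚ) :=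
  Submodule.pi Set.univ fun _ => intQ

lemma bQ_add_left (L : IntLattice) (a b y : Fin L.n → ℚ) :
    L.bQ (a + b) y = L.bQ a y + L.bQ b y := add_dotProduct _ _ _

lemma bQ_smul_left (L : IntLattice) (c : ℤ) (a y : Fin L.n → ℚ) :
    L.bQ (c • a) y = c • L.bQ a y := smul_dotProduct _ _ _

lemma bQ_zero_left (L : IntLattice) (y : Fin L.n → ℚ) :
    L.bQ 0 y = 0 := zero_dotProduct _

/-- The dual lattice `L♯ = {y ∈ L ⊗ ℚ : b(y,x) ∈ ℤ for all x ∈ L}`, inside `ℚ^n`. -/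
def dual (L : IntLattice) : Submodule ℤ (Fin L.n → ℚ) where
  carrier := {y | ∀ x : Fin L.n → ℤ, L.bQ y (fun i => (x i : ℚ)) ∈ intQ}
  add_mem' := by
    intro a b ha hb
    simp only [Set.mem_setOf_eq] at *
    intro x
    rw [bQ_add_left]
    exact add_mem (ha x) (hb x)
  zero_mem' := by
    simp only [Set.mem_setOf_eq]
    intro x
    rw [bQ_zero_left]
    exact zero_mem _
  smul_mem' := by
    intro c a ha
    simp only [Set.mem_setOf_eq] at *
    intro x
    rw [bQ_smul_left]
    exact Submodule.smul_mem _ _ (ha x)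

/-- The discriminant group `discr L = L♯ / L`. -/
abbrev discrG (L : IntLattice) :=
  L.dual ⧸ Submodule.comap L.dual.subtype L.latt

/-- The discriminant quadratic form takes only integer values (mod 2ℤ) on the 2-torsion
subgroup of the discriminant group; phrased via representatives. -/
def EvenTwoTorsion (L : IntLattice) : Prop :=
  ∀ y ∈ L.dual, (2 : ℤ) • y ∈ L.latt → ∃ m : ℤ, L.bQ y y = (m : ℚ)

/-- Two lattices are isometric: a `ℤ`-linear isomorphism preserving the forms. -/
def Isometric (L M : IntLattice) : Prop :=
  ∃ e : (Fin L.n → ℤ) ≃ₗ[ℤ] (Fin M.n → ℤ), ∀ x y, M.bform (e x) (e y) = L.bform x y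

/-- `σ₋(L) = k`: some (hence any) real diagonalization of the form has exactly `k`
negative diagonal entries. -/
def negIndexEq (L : IntLattice) (k : ℕ) : Prop :=
  ∃ P : Matrix (Fin L.n) (Fin L.n) ℝ, IsUnit P.det ∧ ∃ d : Fin L.n → ℝ,
    P.transpose * (L.B.map (Int.cast : ℤ → ℝ)) * P = Matrix.diagonal d ∧
    Nat.card {i : Fin L.n // d i < 0} = k

/-- A 2-root: a vector of square 2. -/
def IsTwoRoot (L : IntLattice) (v : Fin L.n → ℤ) : Prop := L.bform v v = 2

/-- A 6-root: a vector of square 6 with `3 ∣ b(v,x)` for all `x ∈ L`. -/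
def IsSixRoot (L : IntLattice) (v : Fin L.n → ℤ) : Prop :=
  L.bform v v = 6 ∧ ∀ x, (3 : ℤ) ∣ L.bform v x

/-- A root: a 2-root or a 6-root. -/
def IsRoot (L : IntLattice) (v : Fin L.n → ℤ) : Prop := L.IsTwoRoot v ∨ L.IsSixRoot v

/-- The set `{x ∈ L ⊗ ℝ : b(x,x) < 0, b(x,v) ≠ 0 for every root v}`. -/
def negCone (L : IntLattice) : Set (Fin L.n → ℝ) :=
  {x | L.bR x x < 0 ∧ ∀ v : Fin L.n → ℤ, L.IsRoot v → L.bR x (fun i => (v i : ℝ)) ≠ 0}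

/-- The matrix of an endomorphism of `ℤ^n` in the standard basis. -/
def matOf (L : IntLattice) (g : (Fin L.n → ℤ) →ₗ[ℤ] (Fin L.n → ℤ)) :
    Matrix (Fin L.n) (Fin L.n) ℤ :=
  Matrix.of fun i j => g (Pi.single j 1) i

/-- The real extension `g ⊗ ℝ` of an endomorphism `g` of the lattice. -/
def mapR (L : IntLattice) (g : (Fin L.n → ℤ) →ₗ[ℤ] (Fin L.n → ℤ)) :
    (Fin L.n → ℝ) → (Fin L.n → ℝ) :=
  fun x => ((L.matOf g).map (Int.cast : ℤ → ℝ)).mulVec x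

/-- The rational extension `g ⊗ ℚ` of an endomorphism `g` of the lattice. -/
def mapQ (L : IntLattice) (g : (Fin L.n → ℤ) →ₗ[ℤ] (Fin L.n → ℤ)) :
    (Fin L.n → ℚ) → (Fin L.n → ℚ) :=
  fun x => ((L.matOf g).map (Int.cast : ℤ → ℚ)).mulVec x

/-- `g` induces multiplication by `-1` on the 3-torsion subgroup of the discriminant
group; phrased via representatives. -/
def InducesNeg3 (L : IntLattice) (g : (Fin L.n → ℤ) →ₗ[ℤ] (Fin L.n → ℤ)) : Prop :=
  ∀ y ∈ L.dual, (3 : ℤ) • y ∈ L.latt → L.mapQ g y + y ∈ L.latt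

/-- `g` induces the identity on the 3-torsion subgroup of the discriminant group;
phrased via representatives. -/
def InducesId3 (L : IntLattice) (g : (Fin L.n → ℤ) →ₗ[ℤ] (Fin L.n → ℤ)) : Prop :=
  ∀ y ∈ L.dual, (3 : ℤ) • y ∈ L.latt → L.mapQ g y - y ∈ L.latt

/-- `g` is an isometry of `L`. -/
def IsIsometry (L : IntLattice) (g : (Fin L.n → ℤ) ≃ₗ[ℤ] (Fin L.n → ℤ)) : Prop :=
  ∀ x y, L.bform (g x) (g y) = L.bform x y

/-- Achirality: there are an isometry `g` of `L` and a connected component `C` of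
`negCone L` such that `(g ⊗ ℝ)(C) = C` and `g` induces `-1` on the 3-torsion of the
discriminant group. -/
def Achiral (L : IntLattice) : Prop :=
  ∃ g : (Fin L.n → ℤ) ≃ₗ[ℤ] (Fin L.n → ℤ), L.IsIsometry g ∧
    (∃ x ∈ L.negCone,
      L.mapR g.toLinearMap '' connectedComponentIn L.negCone x
        = connectedComponentIn L.negCone x) ∧
    L.InducesNeg3 g.toLinearMap

def Chiral (L : IntLattice) : Prop := ¬ L.Achiral

lemma bform_add_left (L : IntLattice) (a b y : Fin L.n → ℤ) :
    L.bform (a + b) y = L.bform a y + L.bform b y := add_dotProduct _ _ _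

lemma bform_smul_left (L : IntLattice) (c : ℤ) (a y : Fin L.n → ℤ) :
    L.bform (c • a) y = c • L.bform a y := smul_dotProduct _ _ _

lemma bform_zero_left (L : IntLattice) (y : Fin L.n → ℤ) :
    L.bform 0 y = 0 := zero_dotProduct _

/-- The orthogonal complement of a sublattice. -/
def ortho (L : IntLattice) (S : Submodule ℤ (Fin L.n → ℤ)) : Submodule ℤ (Fin L.n → ℤ) where
  carrier := {x | ∀ y ∈ S, L.bform x y = 0}
  add_mem' := by
    intro a b ha hb
    simp only [Set.mem_setOf_eq] at *
    intro y hy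
    rw [bform_add_left, ha y hy, hb y hy]
    ring
  zero_mem' := by
    simp only [Set.mem_setOf_eq]
    intro y _
    exact bform_zero_left L y
  smul_mem' := by
    intro c a ha
    simp only [Set.mem_setOf_eq] at *
    intro y hy
    rw [bform_smul_left, ha y hy]
    simp
  
/-- A primitive sublattice: the quotient is torsion free. -/
def IsPrimitive (L : IntLattice) (S : Submodule ℤ (Fin L.n → ℤ)) : Prop :=
  ∀ (x : Fin L.n → ℤ) (m : ℤ), m ≠ 0 → m • x ∈ S → x ∈ S

/-- A sublattice `S ⊂ L` (with the restricted form) is isometric to the lattice `M`. -/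
def SubIsometric (L : IntLattice) (S : Submodule ℤ (Fin L.n → ℤ)) (M : IntLattice) : Prop :=
  ∃ e : S ≃ₗ[ℤ] (Fin M.n → ℤ), ∀ x y : S, M.bform (e x) (e y) = L.bform x y

/-! ### Concrete lattices -/

/-- The hyperbolic plane `U`. -/
def latU : IntLattice := ⟨2, !![0,1;1,0]⟩

/-- The root lattice `A₁`. -/
def latA1 : IntLattice := ⟨1, !![2]⟩

/-- The root lattice `A₂`. -/
def latA2 : IntLattice := ⟨2, !![2,-1;-1,2]⟩

/-- The root lattice `D₄` (first vector is the central node). -/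
def latD4 : IntLattice := ⟨4, !![2,-1,-1,-1;-1,2,0,0;-1,0,2,0;-1,0,0,2]⟩

/-- The root lattice `E₆`: chain `e₁,…,e₅`, with `e₆` attached to `e₃`. -/
def latE6 : IntLattice :=
  ⟨6, !![ 2,-1, 0, 0, 0, 0;
         -1, 2,-1, 0, 0, 0;
          0,-1, 2,-1, 0,-1;
          0, 0,-1, 2,-1, 0;
          0, 0, 0,-1, 2, 0;
          0, 0,-1, 0, 0, 2]⟩

/-- The root lattice `E₈`: chain `e₁,…,e₇`, with `e₈` attached to `e₅`. -/
def latE8 : IntLattice :=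
  ⟨8, !![ 2,-1, 0, 0, 0, 0, 0, 0;
         -1, 2,-1, 0, 0, 0, 0, 0;
          0,-1, 2,-1, 0, 0, 0, 0;
          0, 0,-1, 2,-1, 0, 0, 0;
          0, 0, 0,-1, 2,-1, 0,-1;
          0, 0, 0, 0,-1, 2,-1, 0;
          0, 0, 0, 0, 0,-1, 2, 0;
          0, 0, 0, 0,-1, 0, 0, 2]⟩

/-- The rank one lattice `⟨k⟩`; in particular `−A₁ = ⟨-2⟩`. -/
def latGen (k : ℤ) : IntLattice := ⟨1, !![k]⟩

/-- `L(c)`: the lattice `L` with its form multiplied by `c`. -/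
def twist (c : ℤ) (L : IntLattice) : IntLattice := ⟨L.n, c • L.B⟩

/-- Orthogonal direct sum of two lattices. -/
def dsum (L M : IntLattice) : IntLattice :=
  ⟨L.n + M.n,
    Matrix.submatrix (Matrix.fromBlocks L.B 0 0 M.B) finSumFinEquiv.symm finSumFinEquiv.symm⟩

instance : Add IntLattice := ⟨dsum⟩

/-- Orthogonal direct sum of `t` copies of a lattice. -/
def rep : ℕ → IntLattice → IntLattice
  | 0, _ => ⟨0, 0⟩
  | (k+1), L => rep k L + L

end IntLattice

/-!
Let `g_h` and the component `C ∋ x_h` witness the achirality of `L_h`, and put `g = 1 ⊕ g_h`.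
Choose `e ∈ L_e ⊗ ℝ` of tiny norm pairing nontrivially with every nonzero vector of `L_e` (its
coordinates are powers of a transcendental number). The segment `{e} × [x_h, g_h x_h]` then stays
in the negative cone of `L_e + L_h`, so `g` preserves the component of `(e, x_h)`. Indeed, a root
`(v_e, 0)` pairs nontrivially with `e`, and for a root `(0, v_h)` of `L_h` the pairing has constant
sign on `C`. For a mixed root, `v_h² ≤ 0` and `v_e² ≤ 2 max(1, -v_h²)` (for a 6-root, `v_e / 3`
lies in `L_e♯`, and `discr L_e` being 2-elementary forces `3 ∣ v_e`), and the pairing of `v_h`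
with `C`, bounded below by reverse Cauchy–Schwarz or, for isotropic `v_h`, by compactness,
dominates `b(e, v_e)`. Finally, `g` acts as `-1` on the 3-torsion because `discr L_e` has none.
-/

-- Lets `Fin (L + M).n` unfold to `Fin (L.n + M.n)`, so that `Fin.append` applies to `L + M`.
attribute [reducible] IntLattice.dsum

open Matrix

namespace Fin

variable {a b : ℕ}

lemma exists_eq_append {α : Type*} (x : Fin (a + b) → α) : ∃ u v, x = Fin.append u v :=
  ⟨_, _, Fin.append_castAdd_natAdd.symm⟩

lemma apply_append {α β : Type*} (f : α → β) (u : Fin a → α) (v : Fin b → α) :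
    (fun i => f (Fin.append u v i)) = Fin.append (fun i => f (u i)) (fun j => f (v j)) := by
  ext i
  induction i using Fin.addCases <;> simp

lemma append_add_append {α : Type*} [Add α] (u u' : Fin a → α) (v v' : Fin b → α) :
    Fin.append u v + Fin.append u' v' = Fin.append (u + u') (v + v') := by
  ext i
  induction i using Fin.addCases <;> simp

lemma smul_append {α β : Type*} [SMul α β] (c : α) (u : Fin a → β) (v : Fin b → β) :
    c • Fin.append u v = Fin.append (c • u) (c • v) := by
  ext i
  induction i using Fin.addCases <;> simp

lemma append_comp_finSumFinEquiv {α : Type*} (u : Fin a → α) (v : Fin b → α) :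
    Fin.append u v ∘ finSumFinEquiv = Sum.elim u v := by
  ext (i | j) <;> simp

lemma continuous_append_right (u : Fin a → ℝ) : Continuous fun v : Fin b → ℝ => Fin.append u v :=
  continuous_pi fun i => by
    induction i using Fin.addCases <;> simp [continuous_apply, continuous_const]

lemma append_dotProduct_append {R : Type*} [NonUnitalNonAssocSemiring R] (u u' : Fin a → R)
    (v v' : Fin b → R) :
    Fin.append u v ⬝ᵥ Fin.append u' v' = u ⬝ᵥ u' + v ⬝ᵥ v' := by
  simp [dotProduct, Fin.sum_univ_add]

end Fin

lemma Matrix.mulVec_dotProduct {R : Type*} [CommSemiring R] {k : ℕ} (A : Matrix (Fin k) (Fin k) R)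
    (x w : Fin k → R) : (A *ᵥ x) ⬝ᵥ w = x ⬝ᵥ (Aᵀ *ᵥ w) := by
  rw [mulVec_transpose, dotProduct_comm x, ← dotProduct_mulVec, dotProduct_comm]

namespace LinearEquiv

variable {R n : Type*} [CommSemiring R] [Fintype n] [DecidableEq n] (g : (n → R) ≃ₗ[R] (n → R))

lemma toMatrix'_mul_toMatrix'_symm :
    LinearMap.toMatrix' g.toLinearMap * LinearMap.toMatrix' g.symm.toLinearMap = 1 := by
  rw [← LinearMap.toMatrix'_comp, LinearEquiv.comp_symm, LinearMap.toMatrix'_id]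

lemma toMatrix'_symm_mul_toMatrix' :
    LinearMap.toMatrix' g.symm.toLinearMap * LinearMap.toMatrix' g.toLinearMap = 1 := by
  rw [← LinearMap.toMatrix'_comp, LinearEquiv.symm_comp, LinearMap.toMatrix'_id]

end LinearEquiv

lemma IsPreconnected.zero_lt_mul {X : Type*} [TopologicalSpace X] {S : Set X}
    (hS : IsPreconnected S) {f : X → ℝ} (hf : ContinuousOn f S) (h0 : ∀ s ∈ S, f s ≠ 0)
    {x y : X} (hx : x ∈ S) (hy : y ∈ S) : 0 < f x * f y := by
  rcases (h0 x hx).lt_or_gt with hfx | hfx <;> rcases (h0 y hy).lt_or_gt with hfy | hfy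
  · exact mul_pos_of_neg_of_neg hfx hfy
  · obtain ⟨s, hs, hs0⟩ := hS.intermediate_value hx hy hf ⟨hfx.le, hfy.le⟩
    exact absurd hs0 (h0 s hs)
  · obtain ⟨s, hs, hs0⟩ := hS.intermediate_value hy hx hf ⟨hfy.le, hfx.le⟩
    exact absurd hs0 (h0 s hs)
  · exact mul_pos hfx hfy

lemma Homeomorph.image_connectedComponentIn_eq_self {X : Type*} [TopologicalSpace X]
    (h : X ≃ₜ X) {F : Set X} (hF : h '' F = F) {x : X} (hx : x ∈ F)
    (hhx : h x ∈ connectedComponentIn F x) :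
    h '' connectedComponentIn F x = connectedComponentIn F x := by
  rw [h.image_connectedComponentIn hx, hF, ← connectedComponentIn_eq hhx]

lemma mul_add_mul_ne_zero_of_zero_lt_mul {A B s t : ℝ} (hAB : 0 < A * B) (hs : 0 ≤ s)
    (ht : 0 ≤ t) (hst : s + t = 1) : s * A + t * B ≠ 0 := fun h => by
  nlinarith [congrArg (· * A) h, congrArg (· * B) h, mul_nonneg hs (sq_nonneg A),
    mul_nonneg ht (sq_nonneg B)]

lemma le_sq_mul_add_mul_of_zero_lt_mul {A B c s t : ℝ} (hAB : 0 < A * B) (hA : c ≤ A ^ 2)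
    (hB : c ≤ B ^ 2) (hs : 0 ≤ s) (ht : 0 ≤ t) (hst : s + t = 1) :
    c ≤ (s * A + t * B) ^ 2 := by
  have hc : c ≤ A * B := by
    by_contra! h
    nlinarith [mul_le_mul hA hB (hAB.trans h).le (sq_nonneg A)]
  have hst2 : (s + t) ^ 2 = 1 := by rw [hst, one_pow]
  nlinarith [mul_nonneg (mul_nonneg hs hs) (sub_nonneg.2 hA),
    mul_nonneg (mul_nonneg ht ht) (sub_nonneg.2 hB),
    mul_nonneg (mul_nonneg hs ht) (sub_nonneg.2 hc)]

lemma exists_dotProduct_intCast_ne_zero (k : ℕ) :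
    ∃ x : Fin k → ℝ, ∀ w : Fin k → ℤ, w ≠ 0 → x ⬝ᵥ (fun i => (w i : ℝ)) ≠ 0 := by
  have hr := (liouville_liouvilleNumber (m := 3) (by norm_num)).transcendental
  refine ⟨fun i => liouvilleNumber 3 ^ (i : ℕ), fun w hw h => hw ?_⟩
  have hp := transcendental_iff.mp hr (∑ i, Polynomial.C (w i) * Polynomial.X ^ (i : ℕ))
    (by simpa [dotProduct, mul_comm] using h)
  ext i
  simpa [Polynomial.finsetSum_coeff, Polynomial.coeff_C_mul_X_pow, Fin.val_inj]
    using congrArg (Polynomial.coeff · i) hp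

lemma exists_smul_eq_intCast {k : ℕ} (u : Fin k → ℚ) :
    ∃ d : ℤ, d ≠ 0 ∧ ∃ w : Fin k → ℤ, (d : ℚ) • u = fun i => (w i : ℚ) := by
  obtain ⟨b, hb⟩ := IsLocalization.exist_integer_multiples_of_finite (nonZeroDivisors ℤ) u
  choose w hw using hb
  exact ⟨b, nonZeroDivisors.coe_ne_zero b, w,
    funext fun i => by simpa [zsmul_eq_mul] using (hw i).symm⟩

lemma intCast_ne_zero_of_ne_zero {k : ℕ} {v : Fin k → ℤ} (hv : v ≠ 0) :
    (fun i => (v i : ℝ)) ≠ 0 :=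
  fun h => hv (funext fun i => by simpa using congrFun h i)

lemma one_le_norm_intCast {k : ℕ} {v : Fin k → ℤ} (hv : v ≠ 0) : 1 ≤ ‖(fun i => (v i : ℝ))‖ := by
  obtain ⟨i, hi⟩ := Function.ne_iff.mp hv
  calc (1 : ℝ) ≤ |(v i : ℝ)| := by exact_mod_cast Int.one_le_abs hi
    _ ≤ ‖(fun i => (v i : ℝ))‖ := norm_le_pi_norm (fun i => (v i : ℝ)) i

namespace IntLattice

section BlockDiag

variable {R S : Type*} [Semiring R] [Semiring S] {a b : ℕ}

def blockDiagFin (A : Matrix (Fin a) (Fin a) R) (D : Matrix (Fin b) (Fin b) R) :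
    Matrix (Fin (a + b)) (Fin (a + b)) R :=
  (fromBlocks A 0 0 D).submatrix finSumFinEquiv.symm finSumFinEquiv.symm

lemma blockDiagFin_mulVec_append (A : Matrix (Fin a) (Fin a) R) (D : Matrix (Fin b) (Fin b) R)
    (u : Fin a → R) (v : Fin b → R) :
    blockDiagFin A D *ᵥ Fin.append u v = Fin.append (A *ᵥ u) (D *ᵥ v) := by
  rw [blockDiagFin, submatrix_mulVec_equiv, Equiv.symm_symm, Fin.append_comp_finSumFinEquiv,
    fromBlocks_mulVec]
  ext i
  induction i using Fin.addCases <;> simp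

lemma map_blockDiagFin (A : Matrix (Fin a) (Fin a) R) (D : Matrix (Fin b) (Fin b) R)
    {f : R → S} (hf : f 0 = 0) : (blockDiagFin A D).map f = blockDiagFin (A.map f) (D.map f) := by
  ext i j
  induction i using Fin.addCases <;> induction j using Fin.addCases <;> simp [blockDiagFin, hf]

lemma blockDiagFin_mul (A A' : Matrix (Fin a) (Fin a) R) (D D' : Matrix (Fin b) (Fin b) R) :
    blockDiagFin A D * blockDiagFin A' D' = blockDiagFin (A * A') (D * D') := by
  simp [blockDiagFin, submatrix_mul_equiv, fromBlocks_multiply]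

lemma blockDiagFin_one :
    blockDiagFin (1 : Matrix (Fin a) (Fin a) R) (1 : Matrix (Fin b) (Fin b) R) = 1 := by
  simp [blockDiagFin]

end BlockDiag

section Forms

variable (L : IntLattice)

@[simp] lemma bR_add_left (x y z : Fin L.n → ℝ) : L.bR (x + y) z = L.bR x z + L.bR y z :=
  add_dotProduct _ _ _

@[simp] lemma bR_add_right (x y z : Fin L.n → ℝ) : L.bR x (y + z) = L.bR x y + L.bR x z := by
  simp [bR, mulVec_add, dotProduct_add]

@[simp] lemma bR_smul_left (c : ℝ) (x y : Fin L.n → ℝ) : L.bR (c • x) y = c * L.bR x y :=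
  smul_dotProduct _ _ _

@[simp] lemma bR_smul_right (c : ℝ) (x y : Fin L.n → ℝ) : L.bR x (c • y) = c * L.bR x y := by
  simp [bR, mulVec_smul, dotProduct_smul]

@[simp] lemma bR_sub_left (x y z : Fin L.n → ℝ) : L.bR (x - y) z = L.bR x z - L.bR y z :=
  sub_dotProduct _ _ _

@[simp] lemma bR_sub_right (x y z : Fin L.n → ℝ) : L.bR x (y - z) = L.bR x y - L.bR x z := by
  simp [bR, mulVec_sub, dotProduct_sub]

@[simp] lemma bR_zero_left (y : Fin L.n → ℝ) : L.bR 0 y = 0 := zero_dotProduct _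

@[simp] lemma bR_zero_right (x : Fin L.n → ℝ) : L.bR x 0 = 0 := by simp [bR]

lemma bR_comm (hs : L.IsSymmLat) (x y : Fin L.n → ℝ) : L.bR x y = L.bR y x := by
  rw [bR, bR, dotProduct_comm, mulVec_dotProduct, ← transpose_map, hs.eq]

lemma bR_intCast (x y : Fin L.n → ℤ) :
    L.bR (fun i => (x i : ℝ)) (fun i => (y i : ℝ)) = L.bform x y := by
  simp [bR, bform, mulVec, dotProduct, Finset.mul_sum]

lemma bQ_intCast (x y : Fin L.n → ℤ) :
    L.bQ (fun i => (x i : ℚ)) (fun i => (y i : ℚ)) = L.bform x y := by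
  simp [bQ, bform, mulVec, dotProduct, Finset.mul_sum]

lemma bR_ratCast (x y : Fin L.n → ℚ) :
    L.bR (fun i => (x i : ℝ)) (fun i => (y i : ℝ)) = L.bQ x y := by
  simp [bR, bQ, mulVec, dotProduct, Finset.mul_sum]

lemma continuous_bR_left (y : Fin L.n → ℝ) : Continuous fun x => L.bR x y :=
  continuous_id.dotProduct continuous_const

lemma continuous_bR_right (x : Fin L.n → ℝ) : Continuous fun y => L.bR x y :=
  continuous_const.dotProduct (continuous_const.matrix_mulVec continuous_id)

lemma continuous_bR_self : Continuous fun x => L.bR x x :=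
  continuous_id.dotProduct (continuous_const.matrix_mulVec continuous_id)

lemma ne_zero_of_bR_self_neg {z : Fin L.n → ℝ} (hz : L.bR z z < 0) : z ≠ 0 := by
  rintro rfl
  simp at hz

lemma bform_zero_right (x : Fin L.n → ℤ) : L.bform x 0 = 0 := by simp [bform]

lemma bform_smul_right (c : ℤ) (x y : Fin L.n → ℤ) : L.bform x (c • y) = c * L.bform x y := by
  simp only [bform, mulVec_smul, dotProduct_smul, smul_eq_mul]

end Forms

section DirectSum

variable (L M : IntLattice)

lemma bform_append (u u' : Fin L.n → ℤ) (v v' : Fin M.n → ℤ) :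
    (L + M).bform (Fin.append u v) (Fin.append u' v') = L.bform u u' + M.bform v v' := by
  show Fin.append u v ⬝ᵥ blockDiagFin L.B M.B *ᵥ Fin.append u' v' = _
  rw [blockDiagFin_mulVec_append, Fin.append_dotProduct_append]
  rfl

lemma bQ_append (u u' : Fin L.n → ℚ) (v v' : Fin M.n → ℚ) :
    (L + M).bQ (Fin.append u v) (Fin.append u' v') = L.bQ u u' + M.bQ v v' := by
  show Fin.append u v ⬝ᵥ (blockDiagFin L.B M.B).map (Int.cast : ℤ → ℚ) *ᵥ Fin.append u' v' = _
  rw [map_blockDiagFin _ _ Int.cast_zero, blockDiagFin_mulVec_append, Fin.append_dotProduct_append]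
  rfl

lemma bR_append (u u' : Fin L.n → ℝ) (v v' : Fin M.n → ℝ) :
    (L + M).bR (Fin.append u v) (Fin.append u' v') = L.bR u u' + M.bR v v' := by
  show Fin.append u v ⬝ᵥ (blockDiagFin L.B M.B).map (Int.cast : ℤ → ℝ) *ᵥ Fin.append u' v' = _
  rw [map_blockDiagFin _ _ Int.cast_zero, blockDiagFin_mulVec_append, Fin.append_dotProduct_append]
  rfl

lemma append_mem_latt (u : Fin L.n → ℚ) (v : Fin M.n → ℚ) :
    Fin.append u v ∈ (L + M).latt ↔ u ∈ L.latt ∧ v ∈ M.latt := by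
  change Fin.append u v ∈ Submodule.pi (Set.univ : Set (Fin (L.n + M.n))) (fun _ => intQ) ↔ _
  simp only [latt, Submodule.mem_pi, Set.mem_univ, true_implies, Fin.forall_fin_add,
    Fin.append_left, Fin.append_right]

-- Stated over `Fin (L + M).n` so that it rewrites the casts of vectors of `L + M`.
lemma intCast_append {R : Type*} [IntCast R] (v₁ : Fin L.n → ℤ) (v₂ : Fin M.n → ℤ) :
    (fun i : Fin (L + M).n => ((Fin.append v₁ v₂ i : ℤ) : R)) =
      Fin.append (fun i => (v₁ i : R)) (fun i => (v₂ i : R)) :=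
  Fin.apply_append _ _ _

lemma append_mem_dual {y₁ : Fin L.n → ℚ} {y₂ : Fin M.n → ℚ}
    (hy : Fin.append y₁ y₂ ∈ (L + M).dual) : y₁ ∈ L.dual ∧ y₂ ∈ M.dual := by
  refine ⟨fun x => ?_, fun x => ?_⟩
  · have h := hy (Fin.append x 0)
    rw [intCast_append, bQ_append] at h
    simpa [← Pi.zero_def, bQ] using h
  · have h := hy (Fin.append 0 x)
    rw [intCast_append, bQ_append] at h
    simpa [← Pi.zero_def, bQ] using h

end DirectSum

section Extension

variable (L : IntLattice)

lemma mapR_apply (g : (Fin L.n → ℤ) →ₗ[ℤ] (Fin L.n → ℤ)) (x : Fin L.n → ℝ) :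
    L.mapR g x = (LinearMap.toMatrix' g).map (Int.cast : ℤ → ℝ) *ᵥ x := rfl

lemma mapR_intCast (g : (Fin L.n → ℤ) →ₗ[ℤ] (Fin L.n → ℤ)) (v : Fin L.n → ℤ) :
    L.mapR g (fun i => (v i : ℝ)) = fun i => (g v i : ℝ) := by
  ext i
  rw [mapR_apply, ← LinearMap.toMatrix'_mulVec g v]
  exact ((Int.castRingHom ℝ).map_mulVec _ v i).symm

lemma mapR_mapR (f g : (Fin L.n → ℤ) →ₗ[ℤ] (Fin L.n → ℤ)) (x : Fin L.n → ℝ) :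
    L.mapR f (L.mapR g x) = L.mapR (f ∘ₗ g) x := by
  simp only [mapR_apply, mulVec_mulVec, ← Int.coe_castRingHom, ← Matrix.map_mul,
    LinearMap.toMatrix'_comp]

lemma mapR_symm_mapR (g : (Fin L.n → ℤ) ≃ₗ[ℤ] (Fin L.n → ℤ)) (x : Fin L.n → ℝ) :
    L.mapR g.symm.toLinearMap (L.mapR g.toLinearMap x) = x := by
  rw [mapR_mapR, LinearEquiv.symm_comp, mapR_apply, LinearMap.toMatrix'_id,
    Matrix.map_one _ Int.cast_zero Int.cast_one, one_mulVec]

lemma continuous_mapR (g : (Fin L.n → ℤ) →ₗ[ℤ] (Fin L.n → ℤ)) : Continuous (L.mapR g) :=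
  continuous_const.matrix_mulVec continuous_id

def mapRHomeomorph (g : (Fin L.n → ℤ) ≃ₗ[ℤ] (Fin L.n → ℤ)) : (Fin L.n → ℝ) ≃ₜ (Fin L.n → ℝ) where
  toFun := L.mapR g.toLinearMap
  invFun := L.mapR g.symm.toLinearMap
  left_inv := L.mapR_symm_mapR g
  right_inv := L.mapR_symm_mapR g.symm
  continuous_toFun := L.continuous_mapR _
  continuous_invFun := L.continuous_mapR _

end Extension

section IdSum

variable {a b : ℕ} (g : (Fin b → ℤ) ≃ₗ[ℤ] (Fin b → ℤ))

def idSum (a : ℕ) : (Fin (a + b) → ℤ) ≃ₗ[ℤ] (Fin (a + b) → ℤ) :=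
  LinearEquiv.ofLinearMap (toLin' (blockDiagFin 1 (LinearMap.toMatrix' g.toLinearMap)))
    (toLin' (blockDiagFin 1 (LinearMap.toMatrix' g.symm.toLinearMap)))
    (by rw [← toLin'_mul, blockDiagFin_mul, g.toMatrix'_mul_toMatrix'_symm, one_mul,
      blockDiagFin_one, toLin'_one])
    (by rw [← toLin'_mul, blockDiagFin_mul, g.toMatrix'_symm_mul_toMatrix', one_mul,
      blockDiagFin_one, toLin'_one])

lemma toMatrix'_idSum :
    LinearMap.toMatrix' (idSum g a).toLinearMap =
      blockDiagFin 1 (LinearMap.toMatrix' g.toLinearMap) :=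
  LinearMap.toMatrix'_toLin' _

lemma idSum_append (u : Fin a → ℤ) (v : Fin b → ℤ) :
    idSum g a (Fin.append u v) = Fin.append u (g v) := by
  rw [← LinearEquiv.coe_coe, ← LinearMap.toMatrix'_mulVec, toMatrix'_idSum,
    blockDiagFin_mulVec_append, one_mulVec, LinearMap.toMatrix'_mulVec, LinearEquiv.coe_coe]

end IdSum

section DirectSumIsometry

variable (L M : IntLattice) (g : (Fin M.n → ℤ) ≃ₗ[ℤ] (Fin M.n → ℤ))

lemma mapR_idSum_append (u : Fin L.n → ℝ) (v : Fin M.n → ℝ) :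
    (L + M).mapR (idSum g L.n).toLinearMap (Fin.append u v) =
      Fin.append u (M.mapR g.toLinearMap v) := by
  rw [mapR_apply, toMatrix'_idSum, map_blockDiagFin _ _ Int.cast_zero,
    Matrix.map_one _ Int.cast_zero Int.cast_one, blockDiagFin_mulVec_append, one_mulVec]
  rfl

lemma mapQ_idSum_append (u : Fin L.n → ℚ) (v : Fin M.n → ℚ) :
    (L + M).mapQ (idSum g L.n).toLinearMap (Fin.append u v) =
      Fin.append u (M.mapQ g.toLinearMap v) := by
  show (LinearMap.toMatrix' (idSum g L.n).toLinearMap).map (Int.cast : ℤ → ℚ) *ᵥ _ = _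
  rw [toMatrix'_idSum, map_blockDiagFin _ _ Int.cast_zero,
    Matrix.map_one _ Int.cast_zero Int.cast_one, blockDiagFin_mulVec_append, one_mulVec]
  rfl

lemma isIsometry_idSum (hg : M.IsIsometry g) : (L + M).IsIsometry (idSum g L.n) := by
  intro x y
  obtain ⟨x₁, x₂, rfl⟩ := Fin.exists_eq_append x
  obtain ⟨y₁, y₂, rfl⟩ := Fin.exists_eq_append y
  rw [idSum_append, idSum_append, bform_append, bform_append, hg]

end DirectSumIsometry

section Isometry

variable {L : IntLattice} {g : (Fin L.n → ℤ) ≃ₗ[ℤ] (Fin L.n → ℤ)}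

lemma IsIsometry.transpose_mul_mul (hg : L.IsIsometry g) :
    (LinearMap.toMatrix' g.toLinearMap)ᵀ * L.B * LinearMap.toMatrix' g.toLinearMap = L.B := by
  ext i j
  have h := hg (Pi.single i 1) (Pi.single j 1)
  rw [bform, bform, ← LinearEquiv.coe_coe, ← LinearMap.toMatrix'_mulVec,
    ← LinearMap.toMatrix'_mulVec, mulVec_dotProduct, mulVec_mulVec, mulVec_mulVec] at h
  simpa [mulVec_single_one, single_one_dotProduct] using h

lemma IsIsometry.bR_mapR (hg : L.IsIsometry g) (x y : Fin L.n → ℝ) :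
    L.bR (L.mapR g.toLinearMap x) (L.mapR g.toLinearMap y) = L.bR x y := by
  have h := congrArg (Int.castRingHom ℝ).mapMatrix hg.transpose_mul_mul
  simp only [map_mul, RingHom.mapMatrix_apply] at h
  rw [mapR_apply, mapR_apply, bR, bR, mulVec_dotProduct, mulVec_mulVec, mulVec_mulVec,
    ← transpose_map]
  exact congrArg (fun M => x ⬝ᵥ M *ᵥ y) h

lemma IsIsometry.symm (hg : L.IsIsometry g) : L.IsIsometry g.symm := fun x y => by
  rw [← hg, LinearEquiv.apply_symm_apply, LinearEquiv.apply_symm_apply]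

lemma IsIsometry.isRoot_apply (hg : L.IsIsometry g) {v : Fin L.n → ℤ} (hv : L.IsRoot v) :
    L.IsRoot (g v) := by
  rcases hv with h2 | ⟨h6, h3⟩
  · exact Or.inl (by rwa [IsTwoRoot, hg])
  · refine Or.inr ⟨by rwa [hg], fun x => ?_⟩
    simpa [← hg v (g.symm x)] using h3 (g.symm x)

lemma IsIsometry.mapsTo_negCone (hg : L.IsIsometry g) :
    Set.MapsTo (L.mapR g.toLinearMap) L.negCone L.negCone := by
  rintro z ⟨hz, hroots⟩
  refine ⟨by rwa [hg.bR_mapR], fun v hv => ?_⟩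
  have hv' : (fun i => (v i : ℝ)) = L.mapR g.toLinearMap (fun i => (g.symm v i : ℝ)) := by
    rw [mapR_intCast]
    simp
  rw [hv', hg.bR_mapR]
  exact hroots _ (hg.symm.isRoot_apply hv)

lemma IsIsometry.image_mapRHomeomorph_negCone (hg : L.IsIsometry g) :
    L.mapRHomeomorph g '' L.negCone = L.negCone :=
  hg.mapsTo_negCone.image_subset.antisymm fun z hz =>
    ⟨_, hg.symm.mapsTo_negCone hz, L.mapR_symm_mapR g.symm z⟩

end Isometry

section PositiveDefinite

variable {L : IntLattice}

lemma bform_self_nonneg (hpos : ∀ x : Fin L.n → ℤ, x ≠ 0 → 0 < L.bform x x)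
    (x : Fin L.n → ℤ) : 0 ≤ L.bform x x := by
  rcases eq_or_ne x 0 with rfl | hx
  · simp [bform]
  · exact (hpos x hx).le

lemma bQ_self_nonneg (hpos : ∀ x : Fin L.n → ℤ, x ≠ 0 → 0 < L.bform x x)
    (u : Fin L.n → ℚ) : 0 ≤ L.bQ u u := by
  obtain ⟨d, hd, w, hw⟩ := exists_smul_eq_intCast u
  have h : (d : ℚ) ^ 2 * L.bQ u u = L.bform w w := by
    rw [← bQ_intCast, ← hw]
    simp only [bQ, mulVec_smul, dotProduct_smul, smul_dotProduct, smul_eq_mul]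
    ring
  have hw : (0 : ℚ) ≤ L.bform w w := by exact_mod_cast bform_self_nonneg hpos w
  exact nonneg_of_mul_nonneg_right (h ▸ hw) (by positivity)

lemma bR_self_nonneg (hpos : ∀ x : Fin L.n → ℤ, x ≠ 0 → 0 < L.bform x x)
    (x : Fin L.n → ℝ) : 0 ≤ L.bR x x :=
  (DenseRange.piMap fun _ => Rat.denseRange_cast).induction_on x
    (isClosed_le continuous_const L.continuous_bR_self) fun u => by
      rw [show Pi.map _ u = fun i => (u i : ℝ) from rfl, bR_ratCast]
      exact_mod_cast bQ_self_nonneg hpos u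

lemma sq_bR_le_mul (hs : L.IsSymmLat) (hpsd : ∀ z, 0 ≤ L.bR z z) (x y : Fin L.n → ℝ) :
    L.bR x y ^ 2 ≤ L.bR x x * L.bR y y := by
  have key : ∀ t : ℝ, 0 ≤ L.bR y y * (t * t) + 2 * L.bR x y * t + L.bR x x := fun t => by
    have h := hpsd (x + t • y)
    simp only [bR_add_left, bR_add_right, bR_smul_left, bR_smul_right, L.bR_comm hs y x] at h
    linarith
  have := discrim_le_zero key
  rw [discrim] at this
  nlinarith

lemma exists_bR_intCast_ne_zero_of_bR_self_lt
    (hpos : ∀ x : Fin L.n → ℤ, x ≠ 0 → 0 < L.bform x x) {δ : ℝ} (hδ : 0 < δ) :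
    ∃ x : Fin L.n → ℝ, (∀ v : Fin L.n → ℤ, v ≠ 0 → L.bR x (fun i => (v i : ℝ)) ≠ 0) ∧
      L.bR x x < δ := by
  obtain ⟨x, hx⟩ := exists_dotProduct_intCast_ne_zero L.n
  have hBv : ∀ v : Fin L.n → ℤ, L.bR x (fun i => (v i : ℝ)) = x ⬝ᵥ fun i => (L.B *ᵥ v) i := by
    intro v
    simp [bR, mulVec, dotProduct]
  set q := L.bR x x
  have hq : 0 ≤ q := bR_self_nonneg hpos x
  set t := Real.sqrt (δ / (q + 1))
  have ht : 0 < t := Real.sqrt_pos.mpr (by positivity)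
  refine ⟨t • x, fun v hv => ?_, ?_⟩
  · rw [bR_smul_left, hBv]
    refine mul_ne_zero ht.ne' (hx _ fun h => ?_)
    have := hpos v hv
    rw [bform, h, dotProduct_zero] at this
    exact this.false
  · rw [bR_smul_left, bR_smul_right, ← mul_assoc, ← sq, Real.sq_sqrt (by positivity),
      div_mul_eq_mul_div, div_lt_iff₀ (by positivity)]
    nlinarith

end PositiveDefinite

section Hyperbolic

variable {L : IntLattice}

lemma bR_mulVec_mulVec_of_diagonalize {P : Matrix (Fin L.n) (Fin L.n) ℝ} {d : Fin L.n → ℝ}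
    (hP : Pᵀ * L.B.map (Int.cast : ℤ → ℝ) * P = diagonal d) (a b : Fin L.n → ℝ) :
    L.bR (P *ᵥ a) (P *ᵥ b) = ∑ i, d i * (a i * b i) := by
  rw [bR, mulVec_dotProduct, mulVec_mulVec, mulVec_mulVec, hP]
  simp only [dotProduct, mulVec_diagonal]
  exact Finset.sum_congr rfl fun i _ => by ring

lemma exists_linearMap_bR_self_pos (hnd : L.Nondeg) (hsig : L.negIndexEq 1) :
    ∃ φ : (Fin L.n → ℝ) →ₗ[ℝ] ℝ, ∀ u, φ u = 0 → u ≠ 0 → 0 < L.bR u u := by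
  obtain ⟨P, hPdet, d, hP, hcard⟩ := hsig
  obtain ⟨⟨i₀, _⟩, hi₀⟩ := Nat.card_eq_one_iff_exists.mp hcard
  have hd : ∀ i, d i ≠ 0 := by
    have h := congrArg det hP
    have hB : (L.B.map (Int.cast : ℤ → ℝ)).det = L.B.det :=
      ((Int.castRingHom ℝ).map_det L.B).symm
    rw [det_mul, det_mul, det_transpose, det_diagonal, hB] at h
    intro i hi
    rw [Finset.prod_eq_zero (Finset.mem_univ i) hi, mul_eq_zero, mul_eq_zero] at h
    rcases h with (h | h) | h
    · exact hPdet.ne_zero h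
    · exact hnd (by exact_mod_cast h)
    · exact hPdet.ne_zero h
  have hpos : ∀ i ≠ i₀, 0 < d i := fun i hi =>
    (hd i).lt_or_gt.resolve_left fun h => hi (congrArg Subtype.val (hi₀ ⟨i, h⟩))
  refine ⟨(LinearMap.proj i₀).comp (toLin' P⁻¹), fun u hu hu0 => ?_⟩
  obtain ⟨c, rfl⟩ : ∃ c, u = P *ᵥ c :=
    ⟨P⁻¹ *ᵥ u, by rw [mulVec_mulVec, mul_nonsing_inv _ hPdet, one_mulVec]⟩
  have hc : c i₀ = 0 := by simpa [mulVec_mulVec, nonsing_inv_mul _ hPdet] using hu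
  obtain ⟨j, hj⟩ : ∃ j, c j ≠ 0 := by
    by_contra! h
    exact hu0 (by rw [show c = 0 from funext h, mulVec_zero])
  have hji : j ≠ i₀ := by
    rintro rfl
    exact hj hc
  rw [bR_mulVec_mulVec_of_diagonalize hP]
  refine Finset.sum_pos' (fun i _ => ?_)
    ⟨j, Finset.mem_univ j, mul_pos (hpos j hji) (mul_self_pos.2 hj)⟩
  rcases eq_or_ne i i₀ with rfl | hi
  · simp [hc]
  · exact mul_nonneg (hpos i hi).le (mul_self_nonneg _)

lemma bR_self_pos_of_bR_eq_zero (hs : L.IsSymmLat) (hnd : L.Nondeg) (hsig : L.negIndexEq 1)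
    {z w : Fin L.n → ℝ} (hz : L.bR z z < 0) (hzw : L.bR z w = 0) (hw : w ≠ 0) :
    0 < L.bR w w := by
  obtain ⟨φ, hφ⟩ := exists_linearMap_bR_self_pos hnd hsig
  have hφz : φ z ≠ 0 := fun h => (hφ z h (L.ne_zero_of_bR_self_neg hz)).not_gt hz
  set a := φ w / φ z
  have hu : φ (w - a • z) = 0 := by simp [a, div_mul_cancel₀ _ hφz]
  have hqu : L.bR (w - a • z) (w - a • z) = L.bR w w + a ^ 2 * L.bR z z := by
    simp only [bR_sub_left, bR_sub_right, bR_smul_left, bR_smul_right, L.bR_comm hs w z, hzw]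
    ring
  rcases eq_or_ne (w - a • z) 0 with h0 | h0
  · rw [sub_eq_zero] at h0
    rw [h0, bR_smul_right, mul_eq_zero] at hzw
    rcases hzw with ha | hz0
    · exact absurd (by rw [h0, ha, zero_smul]) hw
    · exact absurd hz0 hz.ne
  · nlinarith [hφ _ hu h0, sq_nonneg a]

lemma bR_ne_zero_of_bR_self_nonpos (hs : L.IsSymmLat) (hnd : L.Nondeg) (hsig : L.negIndexEq 1)
    {z v : Fin L.n → ℝ} (hz : L.bR z z < 0) (hv : v ≠ 0) (hqv : L.bR v v ≤ 0) : L.bR z v ≠ 0 :=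
  fun h => (bR_self_pos_of_bR_eq_zero hs hnd hsig hz h hv).not_ge hqv

lemma bR_self_mul_le_sq_bR (hs : L.IsSymmLat) (hnd : L.Nondeg) (hsig : L.negIndexEq 1)
    {z : Fin L.n → ℝ} (hz : L.bR z z < 0) (v : Fin L.n → ℝ) :
    L.bR v v * L.bR z z ≤ L.bR z v ^ 2 := by
  set a := L.bR z v / L.bR z z
  have hzv : L.bR z v = a * L.bR z z := (div_mul_cancel₀ _ hz.ne).symm
  have hzw : L.bR z (v - a • z) = 0 := by simp [hzv]
  have hw : 0 ≤ L.bR (v - a • z) (v - a • z) := by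
    rcases eq_or_ne (v - a • z) 0 with h | h
    · simp [h]
    · exact (bR_self_pos_of_bR_eq_zero hs hnd hsig hz hzw h).le
  have hqw : L.bR (v - a • z) (v - a • z) = L.bR v v - a ^ 2 * L.bR z z := by
    simp only [bR_sub_left, bR_sub_right, bR_smul_left, bR_smul_right, L.bR_comm hs v z, hzv]
    ring
  rw [hzv]
  nlinarith [mul_nonneg hw (neg_nonneg.2 hz.le)]

lemma exists_pos_le_abs_bR_of_isotropic (hs : L.IsSymmLat) (hnd : L.Nondeg)
    (hsig : L.negIndexEq 1) {z : Fin L.n → ℝ} (hz : L.bR z z < 0) :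
    ∃ ε > 0, ∀ v : Fin L.n → ℤ, v ≠ 0 → L.bform v v = 0 →
      ε ≤ |L.bR z (fun i => (v i : ℝ))| := by
  set K := Metric.sphere (0 : Fin L.n → ℝ) 1 ∩ {u | L.bR u u = 0}
  have hK : IsCompact K :=
    (isCompact_sphere 0 1).inter_right (isClosed_eq L.continuous_bR_self continuous_const)
  have hmem : ∀ v : Fin L.n → ℤ, v ≠ 0 → L.bform v v = 0 →
      ‖(fun i => (v i : ℝ))‖⁻¹ • (fun i => (v i : ℝ)) ∈ K := fun v hv hq => by
    have hN := (one_pos.trans_le (one_le_norm_intCast hv)).ne'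
    refine ⟨by simp [norm_smul, hN], ?_⟩
    simp [bR_intCast, hq]
  rcases K.eq_empty_or_nonempty with hKe | hKne
  · exact ⟨1, one_pos, fun v hv hq => absurd (hmem v hv hq) (hKe ▸ Set.notMem_empty _)⟩
  obtain ⟨u₀, ⟨hu₀, hqu₀⟩, hmin⟩ :=
    hK.exists_isMinOn hKne (L.continuous_bR_right z).abs.continuousOn
  have hu₀0 : u₀ ≠ 0 := ne_zero_of_mem_sphere one_ne_zero ⟨u₀, hu₀⟩
  refine ⟨_, abs_pos.2 (bR_ne_zero_of_bR_self_nonpos hs hnd hsig hz hu₀0 hqu₀.le),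
    fun v hv hq => ?_⟩
  have h := hmin (hmem v hv hq)
  simp only [Set.mem_ofPred_eq, bR_smul_right, abs_mul, abs_inv, abs_norm] at h
  calc |L.bR z u₀| ≤ _ := h
    _ ≤ |L.bR z (fun i => (v i : ℝ))| :=
      mul_le_of_le_one_left (abs_nonneg _) (inv_le_one_of_one_le₀ (one_le_norm_intCast hv))

lemma exists_pos_mul_max_le_sq_bR (hs : L.IsSymmLat) (hnd : L.Nondeg) (hsig : L.negIndexEq 1)
    {z : Fin L.n → ℝ} (hz : L.bR z z < 0) :
    ∃ κ > 0, ∀ v : Fin L.n → ℤ, v ≠ 0 → L.bform v v ≤ 0 →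
      κ * max 1 (-(L.bform v v : ℝ)) ≤ L.bR z (fun i => (v i : ℝ)) ^ 2 := by
  obtain ⟨ε, hε, hεv⟩ := exists_pos_le_abs_bR_of_isotropic hs hnd hsig hz
  refine ⟨min (ε ^ 2) (-L.bR z z), lt_min (by positivity) (by linarith), fun v hv hqv => ?_⟩
  rcases hqv.eq_or_lt with h0 | hneg
  · rw [h0, Int.cast_zero, neg_zero, max_eq_left zero_le_one, mul_one]
    calc min (ε ^ 2) (-L.bR z z) ≤ ε ^ 2 := min_le_left _ _
      _ ≤ |L.bR z (fun i => (v i : ℝ))| ^ 2 := pow_le_pow_left₀ hε.le (hεv v hv h0) 2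
      _ = _ := sq_abs _
  · have hle : (1 : ℝ) ≤ -(L.bform v v : ℝ) := by exact_mod_cast (by omega : 1 ≤ -L.bform v v)
    rw [max_eq_right hle]
    have h := bR_self_mul_le_sq_bR hs hnd hsig hz (fun i => (v i : ℝ))
    rw [bR_intCast] at h
    nlinarith [min_le_right (ε ^ 2) (-L.bR z z)]

lemma bR_self_add_le (hs : L.IsSymmLat) {x y : Fin L.n → ℝ} {c : ℝ} (hx : L.bR x x ≤ -c)
    (hy : L.bR y y ≤ -c) (hxy : L.bR x y ≤ -c) {s t : ℝ} (hs0 : 0 ≤ s) (ht0 : 0 ≤ t)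
    (hst : s + t = 1) : L.bR (s • x + t • y) (s • x + t • y) ≤ -c := by
  simp only [bR_add_left, bR_add_right, bR_smul_left, bR_smul_right, L.bR_comm hs y x]
  have hst2 : (s + t) ^ 2 = 1 := by rw [hst, one_pow]
  nlinarith [mul_le_mul_of_nonneg_left hx (mul_nonneg hs0 hs0),
    mul_le_mul_of_nonneg_left hy (mul_nonneg ht0 ht0),
    mul_le_mul_of_nonneg_left hxy (mul_nonneg hs0 ht0), congrArg (c * ·) hst2]

lemma zero_lt_bR_mul_bR_of_mem_connectedComponentIn {x₀ x y : Fin L.n → ℝ}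
    (hx : x ∈ connectedComponentIn L.negCone x₀) (hy : y ∈ connectedComponentIn L.negCone x₀)
    {v : Fin L.n → ℝ} (hv : ∀ z ∈ L.negCone, L.bR z v ≠ 0) : 0 < L.bR x v * L.bR y v :=
  isPreconnected_connectedComponentIn.zero_lt_mul (L.continuous_bR_left v).continuousOn
    (fun z hz => hv z (connectedComponentIn_subset _ _ hz)) hx hy

lemma bR_neg_of_mem_connectedComponentIn (hs : L.IsSymmLat) (hnd : L.Nondeg)
    (hsig : L.negIndexEq 1) {x y : Fin L.n → ℝ} (hx : x ∈ L.negCone)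
    (hy : y ∈ connectedComponentIn L.negCone x) : L.bR x y < 0 := by
  have h := zero_lt_bR_mul_bR_of_mem_connectedComponentIn (mem_connectedComponentIn hx) hy
    fun z hz => bR_ne_zero_of_bR_self_nonpos hs hnd hsig hz.1 (L.ne_zero_of_bR_self_neg hx.1)
      hx.1.le
  rw [L.bR_comm hs y x] at h
  exact neg_of_mul_pos_right h hx.1.le

end Hyperbolic

section Discriminant

variable {L : IntLattice}

lemma mem_intQ_iff (q : ℚ) : q ∈ intQ ↔ ∃ m : ℤ, (m : ℚ) = q := by
  simp [intQ, Submodule.mem_span_singleton, zsmul_eq_mul]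

lemma smul_mem_latt_of_forall_smul_eq_zero {k : ℤ} (h : ∀ x : L.discrG, k • x = 0)
    {y : Fin L.n → ℚ} (hy : y ∈ L.dual) : k • y ∈ L.latt := by
  have := h (Submodule.Quotient.mk ⟨y, hy⟩)
  rwa [← Submodule.Quotient.mk_smul, Submodule.Quotient.mk_eq_zero, Submodule.mem_comap] at this

lemma dvd_apply_of_forall_dvd_bform {k c : ℤ} (hc : c ≠ 0) (hkc : IsCoprime c k)
    (hk : ∀ y ∈ L.dual, k • y ∈ L.latt) {u : Fin L.n → ℤ} (hu : ∀ x, c ∣ L.bform u x)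
    (i : Fin L.n) : c ∣ u i := by
  have hcQ : (c : ℚ) ≠ 0 := by exact_mod_cast hc
  have hy : (c : ℚ)⁻¹ • (fun i => (u i : ℚ)) ∈ L.dual := fun x => by
    obtain ⟨m, hm⟩ := hu x
    refine (mem_intQ_iff _).2 ⟨m, ?_⟩
    rw [bQ, smul_dotProduct, ← bQ, bQ_intCast, hm, smul_eq_mul]
    field_simp
    push_cast
    ring
  obtain ⟨m, hm⟩ := (mem_intQ_iff _).1 (Submodule.mem_pi.1 (hk _ hy) i (Set.mem_univ i))
  simp only [Pi.smul_apply, smul_eq_mul, zsmul_eq_mul] at hm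
  field_simp at hm
  exact hkc.dvd_of_dvd_mul_left (Dvd.intro_left m (by exact_mod_cast hm))

lemma inducesNeg3_idSum {M : IntLattice} {g : (Fin M.n → ℤ) ≃ₗ[ℤ] (Fin M.n → ℤ)}
    (h2 : ∀ y ∈ L.dual, (2 : ℤ) • y ∈ L.latt) (hg : M.InducesNeg3 g.toLinearMap) :
    (L + M).InducesNeg3 (idSum g L.n).toLinearMap := by
  intro y hy h3y
  obtain ⟨y₁, y₂, rfl⟩ := Fin.exists_eq_append y
  obtain ⟨hy₁, hy₂⟩ := append_mem_dual L M hy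
  rw [Fin.smul_append, append_mem_latt] at h3y
  rw [mapQ_idSum_append, Fin.append_add_append, append_mem_latt, ← two_smul ℤ y₁]
  exact ⟨h2 y₁ hy₁, hg y₂ hy₂ h3y.2⟩

end Discriminant

section Roots

variable {L M : IntLattice}

lemma two_le_bform_self (heven : L.IsEvenLat) (hpos : ∀ x : Fin L.n → ℤ, x ≠ 0 → 0 < L.bform x x)
    {x : Fin L.n → ℤ} (hx : x ≠ 0) : 2 ≤ L.bform x x := by
  obtain ⟨r, hr⟩ := heven x
  have := hpos x hx
  omega

lemma eighteen_le_bform_self (heven : L.IsEvenLat)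
    (hpos : ∀ x : Fin L.n → ℤ, x ≠ 0 → 0 < L.bform x x) (h2 : ∀ y ∈ L.dual, (2 : ℤ) • y ∈ L.latt)
    {u : Fin L.n → ℤ} (hu0 : u ≠ 0) (hu : ∀ x, (3 : ℤ) ∣ L.bform u x) : 18 ≤ L.bform u u := by
  have hdvd := dvd_apply_of_forall_dvd_bform (by norm_num) (by norm_num) h2 hu
  have hw : u = (3 : ℤ) • fun i => u i / 3 :=
    funext fun i => (Int.mul_ediv_cancel' (hdvd i)).symm
  have hw0 : (fun i => u i / 3) ≠ 0 := fun h => hu0 (by rw [hw, h, smul_zero])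
  have := two_le_bform_self heven hpos hw0
  rw [hw, bform_smul_left, bform_smul_right, smul_eq_mul]
  omega

lemma isRoot_of_isRoot_zero_append {v : Fin M.n → ℤ} (hv : (L + M).IsRoot (Fin.append 0 v)) :
    M.IsRoot v := by
  have hq : (L + M).bform (Fin.append 0 v) (Fin.append 0 v) = M.bform v v := by
    simp [bform_append, bform_zero_left]
  rcases hv with h2 | ⟨h6, h3⟩
  · exact Or.inl (hq.symm.trans h2)
  · refine Or.inr ⟨hq.symm.trans h6, fun x => ?_⟩
    simpa [bform_append, bform_zero_left] using h3 (Fin.append 0 x)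

lemma IsRoot.bform_append_le (heven : L.IsEvenLat)
    (hpos : ∀ x : Fin L.n → ℤ, x ≠ 0 → 0 < L.bform x x) (h2 : ∀ y ∈ L.dual, (2 : ℤ) • y ∈ L.latt)
    {u : Fin L.n → ℤ} {v : Fin M.n → ℤ} (hv : (L + M).IsRoot (Fin.append u v)) (hu : u ≠ 0) :
    M.bform v v ≤ 0 ∧ L.bform u u ≤ 2 * max 1 (-M.bform v v) := by
  have hq2 := two_le_bform_self heven hpos hu
  obtain ⟨r, hr⟩ := heven u
  rcases hv with h | ⟨h, h3⟩
  · rw [IsTwoRoot, bform_append] at h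
    omega
  · rw [bform_append] at h
    have := eighteen_le_bform_self heven hpos h2 hu fun x => by
      simpa [bform_append, bform_zero_right] using h3 (Fin.append x 0)
    omega

end Roots

section Achirality

variable {Le Lh : IntLattice}

lemma append_mem_negCone (hsymme : Le.IsSymmLat) (hevene : Le.IsEvenLat)
    (hpose : ∀ x : Fin Le.n → ℤ, x ≠ 0 → 0 < Le.bform x x)
    (h2 : ∀ y ∈ Le.dual, (2 : ℤ) • y ∈ Le.latt) {δ : ℝ} {x : Fin Le.n → ℝ}
    (hx : ∀ v : Fin Le.n → ℤ, v ≠ 0 → Le.bR x (fun i => (v i : ℝ)) ≠ 0) (hxδ : Le.bR x x < δ)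
    {w : Fin Lh.n → ℝ} (hw : Lh.bR w w ≤ -δ)
    (hroot : ∀ v : Fin Lh.n → ℤ, Lh.IsRoot v → Lh.bR w (fun i => (v i : ℝ)) ≠ 0)
    (hmargin : ∀ v : Fin Lh.n → ℤ, v ≠ 0 → Lh.bform v v ≤ 0 →
      2 * δ * max 1 (-(Lh.bform v v : ℝ)) ≤ Lh.bR w (fun i => (v i : ℝ)) ^ 2) :
    Fin.append x w ∈ (Le + Lh).negCone := by
  refine ⟨by rw [bR_append]; linarith, fun v hv => ?_⟩
  obtain ⟨v₁, v₂, rfl⟩ := Fin.exists_eq_append v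
  rw [intCast_append, bR_append]
  by_cases hv₁ : v₁ = 0
  · subst hv₁
    simpa [← Pi.zero_def] using hroot v₂ (isRoot_of_isRoot_zero_append hv)
  by_cases hv₂ : v₂ = 0
  · subst hv₂
    simpa [← Pi.zero_def] using hx v₁ hv₁
  obtain ⟨hq₂, hq₁⟩ := hv.bform_append_le hevene hpose h2 hv₁
  have hcs := sq_bR_le_mul hsymme (bR_self_nonneg hpose) x (fun i => (v₁ i : ℝ))
  rw [bR_intCast] at hcs
  have hq₁pos : (0 : ℝ) < Le.bform v₁ v₁ := by exact_mod_cast hpose v₁ hv₁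
  have hq₁R : (Le.bform v₁ v₁ : ℝ) ≤ 2 * max 1 (-(Lh.bform v₂ v₂ : ℝ)) := by exact_mod_cast hq₁
  have hlt : Le.bR x (fun i => (v₁ i : ℝ)) ^ 2 < Lh.bR w (fun i => (v₂ i : ℝ)) ^ 2 :=
    calc _ ≤ Le.bR x x * Le.bform v₁ v₁ := hcs
      _ < δ * Le.bform v₁ v₁ := mul_lt_mul_of_pos_right hxδ hq₁pos
      _ ≤ δ * (2 * max 1 (-(Lh.bform v₂ v₂ : ℝ))) :=
        mul_le_mul_of_nonneg_left hq₁R ((bR_self_nonneg hpose x).trans hxδ.le)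
      _ ≤ _ := by
        rw [← mul_assoc, mul_comm δ 2]
        exact hmargin v₂ hv₂ hq₂
  intro h
  rw [eq_neg_of_add_eq_zero_left h, neg_sq] at hlt
  exact hlt.false

lemma exists_append_segment_subset_negCone (hsymmh : Lh.IsSymmLat) (hndh : Lh.Nondeg)
    (hsigh : Lh.negIndexEq 1) (hsymme : Le.IsSymmLat) (hevene : Le.IsEvenLat)
    (hpose : ∀ x : Fin Le.n → ℤ, x ≠ 0 → 0 < Le.bform x x)
    (h2 : ∀ y ∈ Le.dual, (2 : ℤ) • y ∈ Le.latt) {x y : Fin Lh.n → ℝ} (hx : x ∈ Lh.negCone)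
    (hy : y ∈ connectedComponentIn Lh.negCone x) :
    ∃ e : Fin Le.n → ℝ, ∀ w ∈ segment ℝ x y, Fin.append e w ∈ (Le + Lh).negCone := by
  have hxC := mem_connectedComponentIn hx
  have hy' : Lh.bR y y < 0 := (connectedComponentIn_subset _ _ hy).1
  have hxy := bR_neg_of_mem_connectedComponentIn hsymmh hndh hsigh hx hy
  obtain ⟨κx, hκx, hmx⟩ := exists_pos_mul_max_le_sq_bR hsymmh hndh hsigh hx.1
  obtain ⟨κy, hκy, hmy⟩ := exists_pos_mul_max_le_sq_bR hsymmh hndh hsigh hy'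
  set c := min (min (-Lh.bR x x) (-Lh.bR y y)) (-Lh.bR x y)
  have hcx : c ≤ -Lh.bR x x := (min_le_left _ _).trans (min_le_left _ _)
  have hcy : c ≤ -Lh.bR y y := (min_le_left _ _).trans (min_le_right _ _)
  have hcxy : c ≤ -Lh.bR x y := min_le_right _ _
  -- `δ ≤ c` keeps the segment timelike; `2δ ≤ κ` lets the margins beat the pairings with `e`.
  set δ := min c (min κx κy / 2)
  have hδ : 0 < δ := lt_min (lt_min (lt_min (by linarith [hx.1]) (by linarith)) (by linarith))
    (by positivity)
  have hδc : δ ≤ c := min_le_left _ _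
  have hδκ : 2 * δ ≤ min κx κy := by linarith [min_le_right c (min κx κy / 2)]
  obtain ⟨e, he, heδ⟩ := exists_bR_intCast_ne_zero_of_bR_self_lt hpose hδ
  refine ⟨e, ?_⟩
  rintro _ ⟨s, t, hs, ht, hst, rfl⟩
  refine append_mem_negCone hsymme hevene hpose h2 he heδ
    (bR_self_add_le hsymmh (by linarith) (by linarith) (by linarith) hs ht hst)
    (fun v hv => ?_) (fun v hv hqv => ?_)
  · simp only [bR_add_left, bR_smul_left]
    exact mul_add_mul_ne_zero_of_zero_lt_mul
      (zero_lt_bR_mul_bR_of_mem_connectedComponentIn hxC hy fun z hz => hz.2 v hv) hs ht hst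
  · have hsign := zero_lt_bR_mul_bR_of_mem_connectedComponentIn hxC hy fun z hz =>
      bR_ne_zero_of_bR_self_nonpos hsymmh hndh hsigh hz.1 (intCast_ne_zero_of_ne_zero hv)
        (by rw [bR_intCast]; exact_mod_cast hqv)
    have hM : 0 ≤ max 1 (-(Lh.bform v v : ℝ)) := zero_le_one.trans (le_max_left _ _)
    have hδx := mul_le_mul_of_nonneg_right (hδκ.trans (min_le_left _ _)) hM
    have hδy := mul_le_mul_of_nonneg_right (hδκ.trans (min_le_right _ _)) hM
    simp only [bR_add_left, bR_smul_left]
    exact le_sq_mul_add_mul_of_zero_lt_mul hsign (hδx.trans (hmx v hv hqv))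
      (hδy.trans (hmy v hv hqv)) hs ht hst

end Achirality

end IntLattice

open IntLattice in
theorem statement_2_general (Lh Le : IntLattice)
    (hsymmh : Lh.IsSymmLat) (hndh : Lh.Nondeg)
    (hsigh : Lh.negIndexEq 1)
    (hach : Lh.Achiral)
    (hsymme : Le.IsSymmLat) (hevene : Le.IsEvenLat)
    (hpose : ∀ x : Fin Le.n → ℤ, x ≠ 0 → 0 < Le.bform x x)
    (h2e : ∀ x : Le.discrG, (2 : ℤ) • x = 0) :
    (Le + Lh).Achiral := by
  obtain ⟨g, hg, ⟨x, hx, hgC⟩, hg3⟩ := hach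
  have h2 : ∀ y ∈ Le.dual, (2 : ℤ) • y ∈ Le.latt :=
    fun _ => smul_mem_latt_of_forall_smul_eq_zero h2e
  have hgx : Lh.mapR g.toLinearMap x ∈ connectedComponentIn Lh.negCone x :=
    hgC ▸ Set.mem_image_of_mem _ (mem_connectedComponentIn hx)
  obtain ⟨e, he⟩ :=
    exists_append_segment_subset_negCone hsymmh hndh hsigh hsymme hevene hpose h2 hx hgx
  have hex := he x (left_mem_segment ℝ _ _)
  have hseg : (Fin.append e ·) '' segment ℝ x (Lh.mapR g.toLinearMap x) ⊆
      connectedComponentIn (Le + Lh).negCone (Fin.append e x) :=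
    ((convex_segment _ _).isPreconnected.image _ (Fin.continuous_append_right e).continuousOn)
      |>.subset_connectedComponentIn ⟨x, left_mem_segment ℝ _ _, rfl⟩ (Set.image_subset_iff.2 he)
  have hiso := isIsometry_idSum Le Lh g hg
  refine ⟨idSum g Le.n, hiso, ⟨Fin.append e x, hex, ?_⟩, inducesNeg3_idSum h2 hg3⟩
  refine ((Le + Lh).mapRHomeomorph _).image_connectedComponentIn_eq_self
    hiso.image_mapRHomeomorph_negCone hex ?_
  change (Le + Lh).mapR _ (Fin.append e x) ∈ _
  rw [mapR_idSum_append]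
  exact hseg ⟨_, right_mem_segment ℝ _ _, rfl⟩

open IntLattice in
/-- achirality is inherited by extensions by 2-root generated lattices. -/
theorem statement_2 (Lh Le : IntLattice)
    (hsymmh : Lh.IsSymmLat) (hndh : Lh.Nondeg) (hevenh : Lh.IsEvenLat)
    (hsigh : Lh.negIndexEq 1)
    (h3h : Nat.card (Submodule.torsionBy ℤ Lh.discrG 3) = 3)
    (hach : Lh.Achiral)
    (hsymme : Le.IsSymmLat) (hevene : Le.IsEvenLat)
    (hpose : ∀ x : Fin Le.n → ℤ, x ≠ 0 → 0 < Le.bform x x)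
    (hgen : Submodule.span ℤ {v : Fin Le.n → ℤ | Le.bform v v = 2} = ⊤)
    (h2e : ∀ x : Le.discrG, (2 : ℤ) • x = 0) :
    (Le + Lh).Achiral :=
  statement_2_general Lh Le hsymmh hndh hsigh hach hsymme hevene hpose h2e
end

section
/- The lattice U(2)+A₂+E₈(2) is isometric to the lattice U(2)+E₆(2)+D₄, and the lattice U+A₂+E₈(2) is isometric to the lattice U+E₆(2)+D₄. -/
/-! Both isometries are explicit integral changes of basis `P`, with inverse `Q`, carrying the
Gram matrix `G_M` of the right-hand lattice to that `G_L` of the left-hand one: `Pᵀ G_M P = G_L`.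
These identities between `12 × 12` integer matrices are checked by kernel computation. -/

namespace IntLattice

open Matrix

theorem bform_mulVec (M : IntLattice) {m : ℕ} (P : Matrix (Fin M.n) (Fin m) ℤ)
    (x y : Fin m → ℤ) : M.bform (P *ᵥ x) (P *ᵥ y) = x ⬝ᵥ ((Pᵀ * M.B * P) *ᵥ y) := by
  rw [bform, ← mulVec_mulVec, ← mulVec_mulVec, dotProduct_mulVec x Pᵀ, vecMul_transpose]

theorem isometric_of_transpose_mul_mul (L M : IntLattice) (P : Matrix (Fin M.n) (Fin L.n) ℤ)
    (Q : Matrix (Fin L.n) (Fin M.n) ℤ) (hQP : Q * P = 1) (hPQ : P * Q = 1)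
    (hP : Pᵀ * M.B * P = L.B) : L.Isometric M :=
  ⟨LinearEquiv.ofLinearMap P.mulVecLin Q.mulVecLin
      (by rw [← mulVecLin_mul, hPQ, mulVecLin_one])
      (by rw [← mulVecLin_mul, hQP, mulVecLin_one]),
    fun x y => (M.bform_mulVec P x y).trans (by rw [hP]; rfl)⟩

def isoMatU2 : Matrix (Fin 12) (Fin 12) ℤ :=
  !![5, -30, -9, 0, -18, 5, 0, 1, 0, -1, 4, 1;
    -5, 30, 9, 0, 18, -6, 1, 0, -1, 1, -4, -1;
    -2, 12, 4, 0, 7, -2, 0, 0, -1, 1, -1, 0;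
    1, -6, -1, 0, -4, 1, 0, 0, 0, 0, 2, 0;
    -1, 7, 3, 0, 3, -1, 1, -1, 0, 1, 0, -1;
    0, 2, 1, 0, 0, 0, 0, 0, 0, 1, 0, -1;
    -1, 5, 2, 0, 3, -1, 0, 0, 0, 1, -1, -1;
    2, -12, -3, 0, -8, 3, 0, 0, 0, 0, 2, 0;
    -2, 12, 4, 1, 6, -2, 0, 0, 0, 0, -2, 0;
    2, -12, -3, 0, -8, 2, 0, 0, 0, 0, 1, 1;
    1, -6, -2, 1, -4, 1, 0, 0, 0, 0, 1, 0;
    1, -6, -2, 1, -4, 1, 0, 0, 0, 0, 0, 1]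

def isoMatU2Inv : Matrix (Fin 12) (Fin 12) ℤ :=
  !![30, -30, 30, -31, 30, -8, 8, -31, 24, -18, -12, -12;
    -5, 5, -5, 5, -5, 2, -2, 5, -4, 3, 2, 2;
    12, -12, 12, -12, 12, -4, 4, -12, 10, -7, -5, -5;
    6, -6, 6, -6, 6, -2, 2, -6, 5, -4, -2, -2;
    9, -9, 9, -9, 9, -3, 3, -9, 7, -6, -4, -3;
    0, 0, 0, 0, 0, 0, 0, 1, 0, -1, -1, 1;
    -3, 4, -4, 4, -3, 1, -1, 4, -3, 1, 0, 3;
    -7, 8, -8, 9, -8, 3, -2, 8, -6, 3, 1, 5;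
    -11, 11, -12, 13, -11, 4, -3, 11, -9, 5, 2, 7;
    -8, 8, -8, 9, -8, 3, -2, 8, -7, 4, 2, 5;
    -6, 6, -6, 7, -6, 2, -2, 6, -5, 3, 2, 3;
    -6, 6, -6, 7, -6, 2, -2, 6, -5, 3, 1, 4]

def isoMatU : Matrix (Fin 12) (Fin 12) ℤ :=
  !![5, -5, 5, -4, 10, 0, -6, 2, 0, 0, 0, 0;
    -7, 7, -7, 5, -14, 0, 8, -4, 0, 0, 0, 2;
    1, -1, 1, -1, 2, 0, -1, 0, 0, 0, 1, 0;
    2, -2, 2, -2, 4, 0, -2, 0, 0, 1, 0, 0;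
    -2, 2, -2, 1, -4, 0, 3, -3, 1, 1, 0, 0;
    -1, 1, -1, 0, -2, 0, 2, -2, 1, 0, 0, 0;
    2, -2, 2, -2, 4, 0, -2, 0, 1, 0, 0, -1;
    -2, 2, -2, 1, -4, 0, 3, -2, 0, 1, 0, 0;
    -1, 1, 0, 0, -4, 2, 0, 0, 0, 0, 0, 0;
    0, 0, 0, 0, -1, 2, -1, 0, 0, 0, 0, 0;
    -2, 2, -2, 1, -5, 1, 1, 0, 0, 0, 0, 0;
    0, 1, 0, 0, -2, 1, 0, 0, 0, 0, 0, 0]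

def isoMatUInv : Matrix (Fin 12) (Fin 12) ℤ :=
  !![7, -5, 0, -10, 6, 4, -10, 4, -1, -1, 3, 1;
    -7, 5, 0, 10, -6, -4, 10, -4, 0, 1, -3, 1;
    -3, 2, 0, 4, -2, -2, 4, -2, 1, 0, -2, 0;
    1, -1, 0, -2, 2, 0, -2, 0, 0, 0, 0, 0;
    -5, 3, 0, 7, -4, -2, 6, -3, 0, 1, -2, 0;
    -3, 1, 0, 4, -2, 0, 2, -2, 0, 1, -1, 0;
    -1, -1, 0, 1, 0, 2, -2, -1, 0, 0, 0, 0;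
    -3, 0, 0, 4, -1, 1, 0, -3, 0, 0, 0, 0;
    -3, 0, 0, 4, 0, 1, 0, -4, 0, 0, 0, 0;
    -2, 0, 0, 3, 0, 0, 0, -2, 0, 0, 0, 0;
    -1, 0, 1, 1, 0, 0, 0, -1, 0, 0, 0, 0;
    -1, 0, 0, 2, 0, 1, -1, -2, 0, 0, 0, 0]

theorem isometric_U2_A2_E82_U2_E62_D4 :
    Isometric (twist 2 latU + latA2 + twist 2 latE8) (twist 2 latU + twist 2 latE6 + latD4) :=
  isometric_of_transpose_mul_mul _ _ isoMatU2 isoMatU2Inv (by decide) (by decide) (by decide)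

theorem isometric_U_A2_E82_U_E62_D4 :
    Isometric (latU + latA2 + twist 2 latE8) (latU + twist 2 latE6 + latD4) :=
  isometric_of_transpose_mul_mul _ _ isoMatU isoMatUInv (by decide) (by decide) (by decide)

end IntLattice

open IntLattice in
/-- `U(2)+A₂+E₈(2) ≅ U(2)+E₆(2)+D₄` and `U+A₂+E₈(2) ≅ U+E₆(2)+D₄`. -/
theorem statement_19 :
    IntLattice.Isometric (twist 2 latU + latA2 + twist 2 latE8)
      (twist 2 latU + twist 2 latE6 + latD4) ∧
    IntLattice.Isometric (latU + latA2 + twist 2 latE8)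
      (latU + twist 2 latE6 + latD4) :=
  ⟨isometric_U2_A2_E82_U2_E62_D4, isometric_U_A2_E82_U_E62_D4⟩
end
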